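/- Let R be a commutative ring, let x be an invertible element of R with x̄ := x^{−1}, let a = (a_1, a_2, …) be a sequence in R, and let m ≥ 0 be an integer. Then (x − x̄) · h^{sp}_m((x),(x̄)|a) = x·(x|a)^m − x̄·(x̄|a)^m. -/

import Mathlib

open Finset

noncomputable def geom {R : Type*} [CommRing R] (x : R) : PowerSeries R :=
  PowerSeries.mk fun k => x ^ k

noncomputable def lin {R : Type*} [CommRing R] (a : R) : PowerSeries R :=
  1 + PowerSeries.C a * PowerSeries.X

noncomputable def facpow {R : Type*} [CommRing R] (x : R) (a : ℕ → R) (m : ℕ) : R :=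
  ∏ j ∈ Finset.range m, (x + a (j + 1))

noncomputable def hgl {R : Type*} [CommRing R] {n : ℕ} (x : Fin n → R) (a : ℕ → R) (m : ℤ) : R :=
  if 0 ≤ m then
    PowerSeries.coeff m.toNat
      ((∏ i, geom (x i)) * ∏ j ∈ Finset.range (n + m.toNat - 1), lin (a (j + 1)))
  else 0

noncomputable def hsp {R : Type*} [CommRing R] {n : ℕ} (x : Fin n → Rˣ) (a : ℕ → R) (m : ℤ) : R :=
  if 0 ≤ m then
    PowerSeries.coeff m.toNat
      ((∏ i, geom ((x i : R)) * geom (((x i)⁻¹ : Rˣ) : R)) *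
        ∏ j ∈ Finset.range (n + m.toNat - 1), lin (a (j + 1)))
  else 0

noncomputable def hoo {R : Type*} [CommRing R] {n : ℕ} (x : Fin n → Rˣ) (a : ℕ → R) (m : ℤ) : R :=
  if 0 ≤ m then
    PowerSeries.coeff m.toNat
      ((1 + PowerSeries.X) * (∏ i, geom ((x i : R)) * geom (((x i)⁻¹ : Rˣ) : R)) *
        ∏ j ∈ Finset.range (n + m.toNat - 1), lin (a (j + 1)))
  else 0

noncomputable def heo {R : Type*} [CommRing R] {n : ℕ} (x : Fin n → Rˣ) (a : ℕ → R) (m : ℤ) : R :=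
  if 0 ≤ m then
    if h : n = 1 then
      (PowerSeries.coeff m.toNat
        ((geom ((x ⟨0, by omega⟩ : Rˣ) : R) + geom (((x ⟨0, by omega⟩)⁻¹ : Rˣ) : R)) *
          ∏ j ∈ Finset.range m.toNat, lin (a (j + 1))))
        - (if m = 0 then 1 else 0)
    else
      PowerSeries.coeff m.toNat
        ((1 - PowerSeries.X ^ 2) * (∏ i, geom ((x i : R)) * geom (((x i)⁻¹ : Rˣ) : R)) *
          ∏ j ∈ Finset.range (n + m.toNat - 1), lin (a (j + 1)))
  else 0

noncomputable def heod {R : Type*} [CommRing R] {n : ℕ} (x : Fin n → Rˣ) (a : ℕ → R) (m : ℤ) : R :=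
  if 0 < m then
    if h : 0 < n then
      PowerSeries.coeff m.toNat
        ((geom ((x ⟨0, h⟩ : Rˣ) : R) - geom (((x ⟨0, h⟩)⁻¹ : Rˣ) : R)) *
          (∏ i ∈ Finset.univ.filter (fun i : Fin n => i ≠ ⟨0, h⟩),
            geom ((x i : R)) * geom (((x i)⁻¹ : Rˣ) : R)) *
          ∏ j ∈ Finset.range (n + m.toNat - 1), lin (a (j + 1)))
    else 0
  else 0

/-! Over `R[[t]]`, with `g(x) = ∑ xᵏ tᵏ = (1 - x t)⁻¹`, partial fractions give
`(x - y) g(x) g(y) = x g(x) - y g(y)`, so it suffices to show that the coefficient of `tᵐ` in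
`g(x) ∏_{j < m} (1 + b_j t)` is `∏_{j < m} (x + b_j)`. That follows by induction on `m` from
`g(x) = 1 + x t g(x)`, since the polynomial `∏_{j < m} (1 + b_j t)` has no coefficient beyond `tᵐ`. -/

namespace PowerSeries

variable {R : Type*} [CommRing R]

lemma C_sub_mul_geom_mul_geom (x y : R) :
    C (x - y) * (geom x * geom y) = C x * geom x - C y * geom y := by
  ext k
  rw [coeff_C_mul, map_sub, coeff_C_mul, coeff_C_mul, coeff_mul,
    Finset.Nat.sum_antidiagonal_eq_sum_range_succ_mk]
  simp only [geom, coeff_mk]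
  have h := geom_sum₂_mul x y (k + 1)
  rw [Nat.add_sub_cancel] at h
  rw [mul_comm, h]
  ring

lemma geom_eq_one_add_C_mul_X_mul (x : R) : geom x = 1 + C x * X * geom x := by
  ext (_ | k)
  · simp [geom]
  · rw [map_add, mul_assoc, coeff_C_mul, coeff_succ_X_mul]
    simp [geom, pow_succ, mul_comm]

lemma coeff_succ_geom_mul (x : R) (f : R⟦X⟧) (k : ℕ) :
    coeff (k + 1) (geom x * f) = coeff (k + 1) f + x * coeff k (geom x * f) := by
  conv_lhs => rw [geom_eq_one_add_C_mul_X_mul]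
  rw [add_mul, one_mul, map_add, mul_assoc, mul_assoc, coeff_C_mul, coeff_succ_X_mul]

lemma coeff_succ_mul_lin (b : R) (f : R⟦X⟧) (k : ℕ) :
    coeff (k + 1) (f * lin b) = coeff (k + 1) f + b * coeff k f := by
  rw [lin, mul_add, mul_one, map_add, mul_left_comm, mul_comm f, coeff_C_mul, coeff_succ_X_mul]

lemma coeff_prod_lin_eq_zero_of_lt (b : ℕ → R) {m k : ℕ} (hmk : m < k) :
    coeff k (∏ j ∈ Finset.range m, lin (b j)) = 0 := by
  induction m generalizing k with
  | zero => simp [coeff_one, hmk.ne']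
  | succ m ih =>
    obtain ⟨k, rfl⟩ : ∃ k', k = k' + 1 := ⟨k - 1, by omega⟩
    rw [Finset.prod_range_succ, coeff_succ_mul_lin, ih (by omega), ih (by omega), mul_zero,
      add_zero]

lemma coeff_geom_mul_prod_lin (x : R) (b : ℕ → R) (m : ℕ) :
    coeff m (geom x * ∏ j ∈ Finset.range m, lin (b j)) = ∏ j ∈ Finset.range m, (x + b j) := by
  induction m with
  | zero => simp [geom]
  | succ m ih =>
    rw [Finset.prod_range_succ, ← mul_assoc, coeff_succ_mul_lin, coeff_succ_geom_mul, ih,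
      coeff_prod_lin_eq_zero_of_lt b (Nat.lt_succ_self m), Finset.prod_range_succ]
    ring

end PowerSeries

open PowerSeries in
theorem hsp_one_variable {R : Type*} [CommRing R] (x : Rˣ) (a : ℕ → R) (m : ℕ) :
    ((x : R) - ((x⁻¹ : Rˣ) : R)) * hsp (fun _ : Fin 1 => x) a (m : ℤ) =
      (x : R) * facpow ((x : R)) a m - ((x⁻¹ : Rˣ) : R) * facpow (((x⁻¹ : Rˣ) : R)) a m := by
  have hsp_eq : hsp (fun _ : Fin 1 => x) a (m : ℤ) =
      coeff m (geom (x : R) * geom ((x⁻¹ : Rˣ) : R) * ∏ j ∈ Finset.range m, lin (a (j + 1))) := by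
    simp [hsp]
  rw [hsp_eq, ← coeff_C_mul, ← mul_assoc, C_sub_mul_geom_mul_geom, sub_mul, map_sub,
    mul_assoc, mul_assoc, coeff_C_mul, coeff_C_mul, coeff_geom_mul_prod_lin,
    coeff_geom_mul_prod_lin, facpow, facpow]
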